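/- A preference relation ≿ on X that is permutation invariant and convex exhibits preference for naive diversification: for every n, all α, β ∈ 𝕊ⁿ with α majorized by β, and all x₁, …, x_n ∈ X, Σ_{i=1}^n α_i x_i ≿ Σ_{i=1}^n β_i x_i. -/

import Mathlib

open Finset Matrix

/-- Sum of the `k` largest components of a vector in `ℝⁿ`. -/
noncomputable def topSum {n : ℕ} (a : Fin n → ℝ) (k : ℕ) : ℝ :=
  sSup {t : ℝ | ∃ s : Finset (Fin n), s.card = k ∧ t = ∑ i ∈ s, a i}

/-- `Majorizes b a` means `b` majorizes `a`, i.e. `a ≤_m b`. -/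
def Majorizes {n : ℕ} (b a : Fin n → ℝ) : Prop :=
  (∑ i, a i = ∑ i, b i) ∧ ∀ k : ℕ, 1 ≤ k → k ≤ n - 1 → topSum a k ≤ topSum b k

/-- A permutation matrix. -/
def IsPermMatrix {n : ℕ} (P : Matrix (Fin n) (Fin n) ℝ) : Prop :=
  ∃ σ : Equiv.Perm (Fin n), ∀ i j, P i j = if σ i = j then 1 else 0

/-- A convex preference relation: `x ≿ y` implies `t x + (1-t) y ≿ y` for `t ∈ (0,1)`. -/
def ConvexPref {X : Type*} [AddCommGroup X] [Module ℝ X] (pref : X → X → Prop) : Prop :=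
  ∀ x y : X, pref x y → ∀ t : ℝ, 0 < t → t < 1 → pref (t • x + (1 - t) • y) y

/-- A permutation invariant preference relation. -/
def PermInvariant {X : Type*} [AddCommGroup X] [Module ℝ X] (pref : X → X → Prop) : Prop :=
  ∀ (n : ℕ) (a : Fin n → ℝ), a ∈ stdSimplex ℝ (Fin n) →
    ∀ P : Matrix (Fin n) (Fin n) ℝ, IsPermMatrix P → ∀ x : Fin n → X,
      pref (∑ i, a i • x i) (∑ i, (a ᵥ* P) i • x i) ∧
        pref (∑ i, (a ᵥ* P) i • x i) (∑ i, a i • x i)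

/-!
If `α ≤_m β` then `α` lies in the convex hull of the permutations `β ∘ σ`. Otherwise a linear
functional `w` separates `α` from that hull; but sorting `w` and `β` decreasingly and summing by
parts against the partial-sum inequalities of majorization gives `w ⬝ α ≤ w ⬝ (β ∘ σ)` for the
`σ` that orders `β` like `w`.

The map `c ↦ ∑ cᵢ • xᵢ` is linear, so `∑ αᵢ • xᵢ` lies in the convex hull of the points
`∑ β_{σ i} • xᵢ`, each of which is indifferent to `∑ βᵢ • xᵢ` by permutation invariance. For a
complete, transitive and convex preference the upper contour set `{u | u ≿ z}` is convex, so it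
contains that hull.
-/

section Abel

variable {ι : Type*} [LinearOrder ι]

/-- Summation by parts; the lower bound `c` for `w` is what lets the induction on the largest
index go through. -/
theorem Finset.mul_sum_le_sum_mul_of_antitone (s : Finset ι) {w d : ι → ℝ} (hw : Antitone w)
    (hd : ∀ j ∈ s, 0 ≤ ∑ i ∈ s with i ≤ j, d i) {c : ℝ} (hc : ∀ i ∈ s, c ≤ w i) :
    c * ∑ i ∈ s, d i ≤ ∑ i ∈ s, w i * d i := by
  classical
  induction s using Finset.induction_on_max generalizing c with
  | empty => simp
  | insert a s ha ih =>
    have has : a ∉ s := fun h => lt_irrefl a (ha a h)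
    have hprefix : ∀ j ∈ s, ∑ i ∈ insert a s with i ≤ j, d i = ∑ i ∈ s with i ≤ j, d i :=
      fun j hj => by rw [filter_insert, if_neg (ha j hj).not_ge]
    have htotal : ∑ i ∈ insert a s with i ≤ a, d i = ∑ i ∈ insert a s, d i := by
      rw [filter_true_of_mem fun i hi => (mem_insert.mp hi).elim le_of_eq fun h => (ha i h).le]
    have hs := ih (fun j hj => hprefix j hj ▸ hd j (mem_insert_of_mem hj))
      (c := w a) (fun i hi => hw (ha i hi).le)
    have hsum := htotal ▸ hd a (mem_insert_self a s)
    have hca := hc a (mem_insert_self a s)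
    rw [sum_insert has] at hsum ⊢
    rw [sum_insert has]
    calc c * (d a + ∑ i ∈ s, d i) ≤ w a * (d a + ∑ i ∈ s, d i) :=
          mul_le_mul_of_nonneg_right hca hsum
      _ = w a * d a + w a * ∑ i ∈ s, d i := mul_add _ _ _
      _ ≤ _ := (add_le_add_iff_left _).mpr hs

theorem sum_mul_le_sum_mul_of_sum_Iic_le [Fintype ι] [LocallyFiniteOrderBot ι] {w u v : ι → ℝ}
    (hw : Antitone w) (huv : ∀ j, ∑ i ∈ Iic j, u i ≤ ∑ i ∈ Iic j, v i)
    (hsum : ∑ i, u i = ∑ i, v i) : ∑ i, w i * u i ≤ ∑ i, w i * v i := by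
  obtain ⟨c, hc⟩ := (Set.finite_range w).bddBelow
  have := univ.mul_sum_le_sum_mul_of_antitone hw (d := v - u)
    (fun j _ => by simpa [filter_ge_eq_Iic, sum_sub_distrib] using huv j)
    (c := c) (fun i _ => hc ⟨i, rfl⟩)
  simpa [mul_sub, sum_sub_distrib, hsum] using this

end Abel

theorem Fin.exists_perm_antitone {n : ℕ} {α : Type*} [LinearOrder α] (f : Fin n → α) :
    ∃ σ : Equiv.Perm (Fin n), Antitone (f ∘ σ) :=
  ⟨Fin.revPerm.trans (Tuple.sort f), fun _ _ h => Tuple.monotone_sort f (Fin.rev_le_rev.mpr h)⟩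

theorem Finset.sum_le_sum_Iic_of_antitone {ι : Type*} [LinearOrder ι] [LocallyFiniteOrderBot ι]
    {b : ι → ℝ} (hb : Antitone b) (j : ι) {s : Finset ι} (hs : #s = #(Iic j)) :
    ∑ i ∈ s, b i ≤ ∑ i ∈ Iic j, b i := by
  have hsdiff : ∑ i ∈ s \ Iic j, b i ≤ ∑ i ∈ Iic j \ s, b i := calc
    _ ≤ #(s \ Iic j) • b j :=
      sum_le_card_nsmul _ _ _ fun i hi => hb (not_le.mp (mem_Iic.not.mp (mem_sdiff.mp hi).2)).le
    _ = #(Iic j \ s) • b j := by rw [card_sdiff_comm hs]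
    _ ≤ _ := card_nsmul_le_sum _ _ _ fun i hi => hb (mem_Iic.mp (mem_sdiff.mp hi).1)
  linarith [sum_sdiff_sub_sum_sdiff (s₁ := s) (s₂ := Iic j) (f := b)]

section Majorization

variable {n : ℕ}

theorem sum_le_topSum (a : Fin n → ℝ) (s : Finset (Fin n)) : ∑ i ∈ s, a i ≤ topSum a #s := by
  unfold topSum
  refine le_csSup ?_ ⟨s, rfl, rfl⟩
  refine BddAbove.mono ?_ (Set.finite_range fun t : Finset (Fin n) => ∑ i ∈ t, a i).bddAbove
  rintro _ ⟨t, -, rfl⟩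
  exact ⟨t, rfl⟩

theorem topSum_le_sum_Iic {b : Fin n → ℝ} {ρ : Equiv.Perm (Fin n)} (hb : Antitone (b ∘ ρ))
    (j : Fin n) : topSum b #(Iic j) ≤ ∑ i ∈ Iic j, b (ρ i) := by
  refine csSup_le ⟨_, (Iic j).map ρ.toEmbedding, card_map _, (sum_map _ _ _).symm⟩ ?_
  rintro _ ⟨s, hs, rfl⟩
  calc ∑ i ∈ s, b i = ∑ i ∈ s.map ρ.symm.toEmbedding, b (ρ i) := by simp [sum_map]
    _ ≤ _ := sum_le_sum_Iic_of_antitone hb j (by rw [card_map, hs])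

theorem Majorizes.exists_perm_sum_mul_le {a b : Fin n → ℝ} (h : Majorizes b a)
    (w : Fin n → ℝ) : ∃ σ : Equiv.Perm (Fin n), ∑ i, w i * a i ≤ ∑ i, w i * b (σ i) := by
  obtain ⟨π, hπ⟩ := Fin.exists_perm_antitone w
  obtain ⟨ρ, hρ⟩ := Fin.exists_perm_antitone b
  have hsum : ∑ i, a (π i) = ∑ i, b (ρ i) := by
    rw [Equiv.sum_comp π a, Equiv.sum_comp ρ b, h.1]
  have hprefix (j : Fin n) : ∑ i ∈ Iic j, a (π i) ≤ ∑ i ∈ Iic j, b (ρ i) := by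
    rcases lt_or_eq_of_le (Nat.le_sub_one_of_lt j.2 : (j : ℕ) ≤ n - 1) with hj | hj
    · calc ∑ i ∈ Iic j, a (π i) = ∑ i ∈ (Iic j).map π.toEmbedding, a i :=
          (sum_map (Iic j) π.toEmbedding a).symm
        _ ≤ topSum a #(Iic j) := by simpa using sum_le_topSum a ((Iic j).map π.toEmbedding)
        _ ≤ topSum b #(Iic j) := h.2 _ (by simp) (by rw [Fin.card_Iic]; omega)
        _ ≤ _ := topSum_le_sum_Iic hρ j
    · have : Iic j = univ := eq_univ_of_forall fun i => mem_Iic.mpr (Fin.le_def.mpr (by omega))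
      rw [this, hsum]
  refine ⟨π.symm.trans ρ, ?_⟩
  calc ∑ i, w i * a i = ∑ i, w (π i) * a (π i) := (Equiv.sum_comp π fun i => w i * a i).symm
    _ ≤ ∑ i, w (π i) * b (ρ i) := sum_mul_le_sum_mul_of_sum_Iic_le hπ hprefix hsum
    _ = _ := by simpa using Equiv.sum_comp π fun i => w i * b (ρ (π.symm i))

theorem Majorizes.mem_convexHull {a b : Fin n → ℝ} (h : Majorizes b a) :
    a ∈ convexHull ℝ (Set.range fun σ : Equiv.Perm (Fin n) => b ∘ σ) := by
  by_contra ha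
  obtain ⟨f, u, hfK, hfa⟩ := geometric_hahn_banach_closed_point (convex_convexHull ℝ _)
    ((Set.finite_range _).isCompact_convexHull (𝕜 := ℝ)).isClosed ha
  set w : Fin n → ℝ := fun i => f fun j => if i = j then 1 else 0
  have hf (v : Fin n → ℝ) : f v = ∑ i, w i * v i := by
    simpa [mul_comm] using f.toLinearMap.pi_apply_eq_sum_univ v
  obtain ⟨σ, hσ⟩ := h.exists_perm_sum_mul_le w
  have hfσ := hfK _ (subset_convexHull ℝ _ ⟨σ, rfl⟩)
  rw [hf] at hfσ hfa
  simp only [Function.comp_apply] at hfσ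
  linarith

end Majorization

section Preference

variable {X : Type*} [AddCommGroup X] [Module ℝ X] {pref : X → X → Prop}

theorem ConvexPref.convex_setOf_pref (hConv : ConvexPref pref)
    (hcomplete : ∀ x y : X, pref x y ∨ pref y x)
    (htrans : ∀ x y z : X, pref x y → pref y z → pref x z) (z : X) :
    Convex ℝ {u | pref u z} := by
  refine convex_iff_forall_pos.mpr fun u hu v hv s t hs ht hst => ?_
  rcases hcomplete u v with huv | hvu
  · have := hConv u v huv s hs (by linarith)
    rw [show 1 - s = t by linarith] at this
    exact htrans _ _ _ this hv
  · have := hConv v u hvu t ht (by linarith)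
    rw [show 1 - t = s by linarith, add_comm] at this
    exact htrans _ _ _ this hu

theorem PermInvariant.pref_sum_comp_perm (hPI : PermInvariant pref) {n : ℕ} {b : Fin n → ℝ}
    (hb : b ∈ stdSimplex ℝ (Fin n)) (σ : Equiv.Perm (Fin n)) (x : Fin n → X) :
    pref (∑ i, b (σ i) • x i) (∑ i, b i • x i) := by
  have hP : IsPermMatrix (σ⁻¹.permMatrix ℝ) :=
    ⟨σ⁻¹, fun i j => by simp [PEquiv.toMatrix_apply, Equiv.toPEquiv_apply]⟩
  simpa [vecMul_permMatrix, Equiv.Perm.inv_def] using (hPI n b hb _ hP x).2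

end Preference

/-- A permutation invariant and convex preference relation exhibits preference
for naive diversification: if `α ≤_m β` then `∑ αᵢ xᵢ ≿ ∑ βᵢ xᵢ`. -/
theorem permInvariant_convex_naiveDiv {X : Type*} [AddCommGroup X] [Module ℝ X]
    (pref : X → X → Prop)
    (hcomplete : ∀ x y : X, pref x y ∨ pref y x)
    (htrans : ∀ x y z : X, pref x y → pref y z → pref x z)
    (hPI : PermInvariant pref) (hConv : ConvexPref pref) :
    ∀ (n : ℕ) (a b : Fin n → ℝ), a ∈ stdSimplex ℝ (Fin n) → b ∈ stdSimplex ℝ (Fin n) →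
      Majorizes b a → ∀ x : Fin n → X,
        pref (∑ i, a i • x i) (∑ i, b i • x i) := by
  intro n a b _ hb hmaj x
  let L := Fintype.linearCombination ℝ x
  have hperm : L '' Set.range (fun σ : Equiv.Perm (Fin n) => b ∘ σ) ⊆ {u | pref u (L b)} := by
    rintro _ ⟨_, ⟨σ, rfl⟩, rfl⟩
    exact hPI.pref_sum_comp_perm hb σ x
  have hhull := convexHull_min hperm (hConv.convex_setOf_pref hcomplete htrans (L b))
  rw [← L.image_convexHull] at hhull
  exact hhull ⟨a, hmaj.mem_convexHull, rfl⟩
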